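/- arXiv:math/0302070 — 3 statements merged into one kernel-verified Lean document; each statement's English description precedes it below -/
import Mathlib

section
/- Let (b,ψ) be a smooth solution of the vortex equations on ℝ² for parameter ε > 0. Then for every w = (w₁,w₂) ∈ ℝ², the pair (c,f) given by c = (−w₂F₁₂, w₁F₁₂) and f = w₁D₁ψ + w₂D₂ψ solves the linearized vortex system (L1)–(L3) at (b,ψ). -/
noncomputable section

open Complex MeasureTheory Filter

/-- First partial derivative on `ℝ²`. -/
def pd1 {V : Type*} [NormedAddCommGroup V] [NormedSpace ℝ V] (f : ℝ × ℝ → V) (y : ℝ × ℝ) : V :=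
  fderiv ℝ f y (1, 0)

/-- Second partial derivative on `ℝ²`. -/
def pd2 {V : Type*} [NormedAddCommGroup V] [NormedSpace ℝ V] (f : ℝ × ℝ → V) (y : ℝ × ℝ) : V :=
  fderiv ℝ f y (0, 1)

/-- First covariant derivative `D₁u = ∂₁u + i b₁ u`. -/
def D1 (b1 : ℝ × ℝ → ℝ) (ψ : ℝ × ℝ → ℂ) (y : ℝ × ℝ) : ℂ := pd1 ψ y + I * b1 y * ψ y

/-- Second covariant derivative `D₂u = ∂₂u + i b₂ u`. -/
def D2 (b2 : ℝ × ℝ → ℝ) (ψ : ℝ × ℝ → ℂ) (y : ℝ × ℝ) : ℂ := pd2 ψ y + I * b2 y * ψ y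

/-- Curvature `F₁₂ = ∂₁b₂ − ∂₂b₁`. -/
def F12 (b1 b2 : ℝ × ℝ → ℝ) (y : ℝ × ℝ) : ℝ := pd1 b2 y - pd2 b1 y

/-!
Differentiating the first vortex equation gives `ε ∂ⱼF₁₂ = -ε⁻¹ Re(ψ̄ Dⱼψ)` (the term `i bⱼ |ψ|²`
of `ψ̄ Dⱼψ` is imaginary), which is (L1); with `D₁ψ = i D₂ψ` it also gives (L2), since then
`Im(ψ̄ D₁ψ) = Re(ψ̄ D₂ψ)` and `Im(ψ̄ D₂ψ) = -Re(ψ̄ D₁ψ)`. For (L3), the commutator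
`D₁D₂ - D₂D₁ = i F₁₂` together with `D₁ψ = i D₂ψ` gives `(D₁ - iD₂) D₁ψ = -F₁₂ ψ` and
`(D₁ - iD₂) D₂ψ = i F₁₂ ψ`.
-/

open ComplexConjugate

section Calculus

variable {𝕜 : Type*} [RCLike 𝕜] {E : Type*} [NormedAddCommGroup E] [NormedSpace 𝕜 E]
  {F : Type*} [NormedAddCommGroup F] [NormedSpace 𝕜 F] {f : E → F} {x : E}

theorem ContDiffAt.differentiableAt_fderiv_apply (hf : ContDiffAt 𝕜 2 f x) (v : E) :
    DifferentiableAt 𝕜 (fun z => fderiv 𝕜 f z v) x :=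
  ((hf.fderiv_right (m := 1) le_rfl).differentiableAt one_ne_zero).clm_apply
    (differentiableAt_const v)

theorem ContDiffAt.fderiv_fderiv_apply_comm (hf : ContDiffAt 𝕜 2 f x) (v w : E) :
    fderiv 𝕜 (fun z => fderiv 𝕜 f z w) x v = fderiv 𝕜 (fun z => fderiv 𝕜 f z v) x w := by
  have hd : DifferentiableAt 𝕜 (fderiv 𝕜 f) x :=
    (hf.fderiv_right (m := 1) le_rfl).differentiableAt one_ne_zero
  simpa [fderiv_clm_apply hd (differentiableAt_const _)] using
    (hf.isSymmSndFDerivAt (by simp)).eq v w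

theorem fderiv_const_mul_apply_field (c : 𝕜) (g : E → 𝕜) (x v : E) :
    fderiv 𝕜 (fun z => c * g z) x v = c * fderiv 𝕜 g x v := by
  rw [show (fun z => c * g z) = c • g from rfl, fderiv_const_smul_field]
  rfl

end Calculus

section CovariantDerivative

variable {E : Type*} [NormedAddCommGroup E] [NormedSpace ℝ E]
  {a b : E → ℝ} {ψ f g : E → ℂ} {x : E}

theorem mul_fderiv_apply_of_mul_eq_one_sub_sq_norm {ε : ℝ} {F : E → ℝ}
    (hF : ∀ z, ε * F z = (1 - ‖ψ z‖ ^ 2) / (2 * ε)) (hψ : DifferentiableAt ℝ ψ x) (v : E) :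
    ε * fderiv ℝ F x v = -(ε⁻¹ * (conj (ψ x) * fderiv ℝ ψ x v).re) := by
  have hF' : (fun z => ε * F z) = fun z => (2 * ε)⁻¹ * (1 - ‖ψ z‖ ^ 2) :=
    funext fun z => by rw [hF, div_eq_inv_mul]
  rw [← fderiv_const_mul_apply_field, hF', fderiv_const_mul_apply_field,
    (hψ.hasFDerivAt.norm_sq.const_sub 1).fderiv]
  simp only [neg_apply, smul_apply, ContinuousLinearMap.comp_apply, coe_innerSL_apply,
    Complex.inner, mul_re, conj_re, conj_im, nsmul_eq_mul]
  ring

/-- The covariant derivative `∂ᵥψ + i a ψ` along `v`; `D1 b1` and `D2 b2` are, by definition,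
`covDeriv (1, 0) b1` and `covDeriv (0, 1) b2`. -/
def covDeriv (v : E) (a : E → ℝ) (ψ : E → ℂ) (x : E) : ℂ :=
  fderiv ℝ ψ x v + I * a x * ψ x

theorem covDeriv_eq_add_smul (v : E) :
    covDeriv v a ψ = fun z => fderiv ℝ ψ z v + a z • (I * ψ z) := by
  ext z
  simp only [covDeriv, Complex.real_smul]
  ring

theorem differentiableAt_covDeriv (hψ : ContDiffAt ℝ 2 ψ x) (ha : DifferentiableAt ℝ a x)
    (v : E) : DifferentiableAt ℝ (covDeriv v a ψ) x := by
  rw [covDeriv_eq_add_smul]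
  exact (hψ.differentiableAt_fderiv_apply v).add
    (ha.fun_smul ((hψ.differentiableAt two_ne_zero).const_mul I))

theorem fderiv_covDeriv_apply (hψ : ContDiffAt ℝ 2 ψ x) (ha : DifferentiableAt ℝ a x)
    (u v : E) :
    fderiv ℝ (covDeriv v a ψ) x u = fderiv ℝ (fun z => fderiv ℝ ψ z v) x u
      + I * (fderiv ℝ a x u * ψ x + a x * fderiv ℝ ψ x u) := by
  have hψ' := hψ.differentiableAt two_ne_zero
  rw [covDeriv_eq_add_smul, fderiv_fun_add (hψ.differentiableAt_fderiv_apply v)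
    (ha.fun_smul (hψ'.const_mul I)), fderiv_fun_smul ha (hψ'.const_mul I), fderiv_const_mul hψ' I]
  simp only [add_apply, FunLike.coe_smul, Pi.smul_apply, ContinuousLinearMap.smulRight_apply,
    Complex.real_smul]
  ring

theorem covDeriv_const_mul (hf : DifferentiableAt ℝ f x) (c : ℂ) (v : E) :
    covDeriv v a (fun z => c * f z) x = c * covDeriv v a f x := by
  simp only [covDeriv, fderiv_const_mul hf c, FunLike.coe_smul, Pi.smul_apply, smul_eq_mul]
  ring

theorem covDeriv_add (hf : DifferentiableAt ℝ f x) (hg : DifferentiableAt ℝ g x) (v : E) :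
    covDeriv v a (fun z => f z + g z) x = covDeriv v a f x + covDeriv v a g x := by
  simp only [covDeriv, fderiv_fun_add hf hg, FunLike.coe_add, Pi.add_apply]
  ring

theorem covDeriv_sub_covDeriv_comm (hψ : ContDiffAt ℝ 2 ψ x) (ha : DifferentiableAt ℝ a x)
    (hb : DifferentiableAt ℝ b x) (u v : E) :
    covDeriv u a (covDeriv v b ψ) x - covDeriv v b (covDeriv u a ψ) x
      = I * (fderiv ℝ b x u - fderiv ℝ a x v) * ψ x := by
  simp only [covDeriv.eq_1 u a, covDeriv.eq_1 v b, fderiv_covDeriv_apply hψ ha,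
    fderiv_covDeriv_apply hψ hb, hψ.fderiv_fderiv_apply_comm u v]
  ring

theorem re_conj_mul_covDeriv (v : E) :
    (conj (ψ x) * covDeriv v a ψ x).re = (conj (ψ x) * fderiv ℝ ψ x v).re := by
  simp only [covDeriv, mul_add, add_re, mul_re, mul_im, conj_re, conj_im, I_re, I_im, ofReal_re,
    ofReal_im]
  ring

end CovariantDerivative

section VortexEquations

variable {b1 b2 : ℝ × ℝ → ℝ} {ψ : ℝ × ℝ → ℂ} {y : ℝ × ℝ}

theorem D1_D2_sub_D2_D1 (hψ : ContDiffAt ℝ 2 ψ y) (hb1 : DifferentiableAt ℝ b1 y)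
    (hb2 : DifferentiableAt ℝ b2 y) :
    D1 b1 (D2 b2 ψ) y - D2 b2 (D1 b1 ψ) y = I * F12 b1 b2 y * ψ y := by
  refine (covDeriv_sub_covDeriv_comm hψ hb1 hb2 (1, 0) (0, 1)).trans ?_
  simp [F12, pd1, pd2]

variable (hψ : ContDiffAt ℝ 2 ψ y) (hb1 : DifferentiableAt ℝ b1 y)
  (hb2 : DifferentiableAt ℝ b2 y) (hv : ∀ z, D1 b1 ψ z - I * D2 b2 ψ z = 0)
include hψ hb1 hb2 hv

theorem D1_D1_sub_I_mul_D2_D1 :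
    D1 b1 (D1 b1 ψ) y - I * D2 b2 (D1 b1 ψ) y = -(F12 b1 b2 y * ψ y) := by
  have hD1 : D1 b1 ψ = fun z => I * D2 b2 ψ z := funext fun z => sub_eq_zero.mp (hv z)
  have h : D1 b1 (D1 b1 ψ) y = I * D1 b1 (D2 b2 ψ) y := by
    conv_lhs => rw [hD1]
    exact covDeriv_const_mul (differentiableAt_covDeriv hψ hb2 _) I _
  linear_combination h + I * D1_D2_sub_D2_D1 hψ hb1 hb2 + F12 b1 b2 y * ψ y * I_sq

theorem D1_D2_sub_I_mul_D2_D2 :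
    D1 b1 (D2 b2 ψ) y - I * D2 b2 (D2 b2 ψ) y = I * F12 b1 b2 y * ψ y := by
  have hD2 : D2 b2 ψ = fun z => -I * D1 b1 ψ z := funext fun z => by
    linear_combination I * hv z + D2 b2 ψ z * I_sq
  have h : D2 b2 (D2 b2 ψ) y = -I * D2 b2 (D1 b1 ψ) y := by
    conv_lhs => rw [hD2]
    exact covDeriv_const_mul (differentiableAt_covDeriv hψ hb1 _) (-I) _
  linear_combination -I * h + D1_D2_sub_D2_D1 hψ hb1 hb2 + D2 b2 (D1 b1 ψ) y * I_sq

theorem D1_sub_I_mul_D2_const_mul_add_const_mul (c1 c2 : ℂ) :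
    D1 b1 (fun z => c1 * D1 b1 ψ z + c2 * D2 b2 ψ z) y
      - I * D2 b2 (fun z => c1 * D1 b1 ψ z + c2 * D2 b2 ψ z) y
      = (c2 * I - c1) * F12 b1 b2 y * ψ y := by
  have hD1 : DifferentiableAt ℝ (D1 b1 ψ) y := differentiableAt_covDeriv hψ hb1 _
  have hD2 : DifferentiableAt ℝ (D2 b2 ψ) y := differentiableAt_covDeriv hψ hb2 _
  have hlin : ∀ (u : ℝ × ℝ) (a : ℝ × ℝ → ℝ),
      covDeriv u a (fun z => c1 * D1 b1 ψ z + c2 * D2 b2 ψ z) y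
        = c1 * covDeriv u a (D1 b1 ψ) y + c2 * covDeriv u a (D2 b2 ψ) y := fun u a => by
    rw [covDeriv_add (hD1.const_mul _) (hD2.const_mul _), covDeriv_const_mul hD1,
      covDeriv_const_mul hD2]
  have hf1 : D1 b1 (fun z => c1 * D1 b1 ψ z + c2 * D2 b2 ψ z) y
      = c1 * D1 b1 (D1 b1 ψ) y + c2 * D1 b1 (D2 b2 ψ) y := hlin (1, 0) b1
  have hf2 : D2 b2 (fun z => c1 * D1 b1 ψ z + c2 * D2 b2 ψ z) y
      = c1 * D2 b2 (D1 b1 ψ) y + c2 * D2 b2 (D2 b2 ψ) y := hlin (0, 1) b2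
  rw [hf1, hf2]
  linear_combination c1 * D1_D1_sub_I_mul_D2_D1 hψ hb1 hb2 hv
    + c2 * D1_D2_sub_I_mul_D2_D2 hψ hb1 hb2 hv

end VortexEquations

theorem translation_solves_linearized_general (ε : ℝ)
    (b1 b2 : ℝ × ℝ → ℝ) (ψ : ℝ × ℝ → ℂ)
    (hb1 : ContDiff ℝ (⊤ : ℕ∞) b1) (hb2 : ContDiff ℝ (⊤ : ℕ∞) b2)
    (hψ : ContDiff ℝ (⊤ : ℕ∞) ψ)
    (hv1 : ∀ y, ε * F12 b1 b2 y = (1 - ‖ψ y‖ ^ 2) / (2 * ε))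
    (hv2 : ∀ y, D1 b1 ψ y - I * D2 b2 ψ y = 0) (w1 w2 : ℝ) (y : ℝ × ℝ) :
    ε * (pd1 (fun z => w1 * F12 b1 b2 z) y - pd2 (fun z => -(w2 * F12 b1 b2 z)) y)
        + ε⁻¹ * ((starRingEnd ℂ) (ψ y) *
            ((w1 : ℂ) * D1 b1 ψ y + (w2 : ℂ) * D2 b2 ψ y)).re = 0 ∧
    ε * (pd1 (fun z => -(w2 * F12 b1 b2 z)) y + pd2 (fun z => w1 * F12 b1 b2 z) y)
        + ε⁻¹ * ((starRingEnd ℂ) (ψ y) *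
            ((w1 : ℂ) * D1 b1 ψ y + (w2 : ℂ) * D2 b2 ψ y)).im = 0 ∧
    (D1 b1 (fun z => (w1 : ℂ) * D1 b1 ψ z + (w2 : ℂ) * D2 b2 ψ z) y
        - I * D2 b2 (fun z => (w1 : ℂ) * D1 b1 ψ z + (w2 : ℂ) * D2 b2 ψ z) y)
      + I * ((-(w2 * F12 b1 b2 y) : ℝ) - I * ((w1 * F12 b1 b2 y : ℝ) : ℂ)) * ψ y = 0 := by
  have hψ2 : ContDiffAt ℝ 2 ψ y := (hψ.of_le (WithTop.coe_le_coe.mpr le_top)).contDiffAt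
  have hdF : ∀ v a, ε * fderiv ℝ (F12 b1 b2) y v
      = -(ε⁻¹ * (conj (ψ y) * covDeriv v a ψ y).re) := fun v a => by
    rw [re_conj_mul_covDeriv]
    exact mul_fderiv_apply_of_mul_eq_one_sub_sq_norm hv1 (hψ2.differentiableAt two_ne_zero) v
  have h1 : ε * pd1 (F12 b1 b2) y = -(ε⁻¹ * (conj (ψ y) * D1 b1 ψ y).re) := hdF (1, 0) b1
  have h2 : ε * pd2 (F12 b1 b2) y = -(ε⁻¹ * (conj (ψ y) * D2 b2 ψ y).re) := hdF (0, 1) b2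
  have hD : D1 b1 ψ y = I * D2 b2 ψ y := sub_eq_zero.mp (hv2 y)
  simp only [pd1, pd2, fderiv_const_mul_apply_field, fderiv_fun_neg, neg_apply, mul_add, add_re,
    add_im, mul_left_comm (conj (ψ y)) (_ : ℝ), re_ofReal_mul, im_ofReal_mul] at h1 h2 ⊢
  refine ⟨?_, ?_, ?_⟩
  · linear_combination w1 * h1 + w2 * h2
  · rw [hD, mul_left_comm _ I, I_mul_im]
    rw [hD, mul_left_comm _ I, I_mul_re] at h1
    linear_combination -w2 * h1 + w1 * h2
  · rw [D1_sub_I_mul_D2_const_mul_add_const_mul hψ2 (hb1.differentiable (by simp) y)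
      (hb2.differentiable (by simp) y) hv2]
    push_cast
    linear_combination -(w1 * F12 b1 b2 y * ψ y) * I_sq

/-- `(c,f) = ((−w₂F₁₂, w₁F₁₂), w₁D₁ψ + w₂D₂ψ)` solves the linearized vortex
system (L1)–(L3) at a solution `(b,ψ)` of the vortex equations. -/
theorem translation_solves_linearized (ε : ℝ) (hε : 0 < ε)
    (b1 b2 : ℝ × ℝ → ℝ) (ψ : ℝ × ℝ → ℂ)
    (hb1 : ContDiff ℝ (⊤ : ℕ∞) b1) (hb2 : ContDiff ℝ (⊤ : ℕ∞) b2)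
    (hψ : ContDiff ℝ (⊤ : ℕ∞) ψ)
    (hv1 : ∀ y, ε * F12 b1 b2 y = (1 - ‖ψ y‖ ^ 2) / (2 * ε))
    (hv2 : ∀ y, D1 b1 ψ y - I * D2 b2 ψ y = 0) (w1 w2 : ℝ) (y : ℝ × ℝ) :
    ε * (pd1 (fun z => w1 * F12 b1 b2 z) y - pd2 (fun z => -(w2 * F12 b1 b2 z)) y)
        + ε⁻¹ * ((starRingEnd ℂ) (ψ y) *
            ((w1 : ℂ) * D1 b1 ψ y + (w2 : ℂ) * D2 b2 ψ y)).re = 0 ∧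
    ε * (pd1 (fun z => -(w2 * F12 b1 b2 z)) y + pd2 (fun z => w1 * F12 b1 b2 z) y)
        + ε⁻¹ * ((starRingEnd ℂ) (ψ y) *
            ((w1 : ℂ) * D1 b1 ψ y + (w2 : ℂ) * D2 b2 ψ y)).im = 0 ∧
    (D1 b1 (fun z => (w1 : ℂ) * D1 b1 ψ z + (w2 : ℂ) * D2 b2 ψ z) y
        - I * D2 b2 (fun z => (w1 : ℂ) * D1 b1 ψ z + (w2 : ℂ) * D2 b2 ψ z) y)
      + I * ((-(w2 * F12 b1 b2 y) : ℝ) - I * ((w1 * F12 b1 b2 y : ℝ) : ℂ)) * ψ y = 0 :=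
  translation_solves_linearized_general ε b1 b2 ψ hb1 hb2 hψ hv1 hv2 w1 w2 y
end
end

section
/- Let (b,ψ) be a smooth solution of the vortex equations on ℝ² for parameter ε > 0, and let c = (c₁,c₂) : ℝ² → ℝ² and f : ℝ² → ℂ be smooth and compactly supported. Define the second-variation quadratic form Q(c,f) = ∫_{ℝ²} [ε²(∂₁c₂ − ∂₂c₁)² + |D₁f + ic₁ψ|² + |D₂f + ic₂ψ|² − 2Σ_{j=1,2} c_j·Im(conj(D_jψ)·f) + ε⁻²(Re(ψ̄f))² − (1/(2ε²))(1 − |ψ|²)|f|²]. Then Q(c,f) = ∫_{ℝ²} (ε(∂₁c₂ − ∂₂c₁) + ε⁻¹Re(ψ̄f))² + ∫_{ℝ²} |(D₁f − iD₂f) + i(c₁ − ic₂)ψ|²; in particular Q(c,f) ≥ 0. -/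
/-!
Completing the squares: at every point, the density of `Q(c, f)` equals
`(ε (∂₁c₂ − ∂₂c₁) + ε⁻¹ Re(ψ̄ f))² + |(D₁f − i D₂f) + i (c₁ − i c₂) ψ|² + ∂₂V₁ − ∂₁V₂`
with `V_j = Im(f̄ D_j f) + 2 c_j Re(ψ̄ f)`. Expanding the curl produces the commutator
`[D₁, D₂] = i F₁₂`, and the vortex equations `D₁ψ = i D₂ψ`, `ε² F₁₂ = (1 − |ψ|²)/2` make the
remaining terms cancel. Since `V` has compact support, its curl integrates to zero.
-/

noncomputable section

open Complex MeasureTheory Filter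

open ComplexConjugate

/-- `flux (D_j f) c_j ψ f` is the field `V_j` whose curl `∂₂V₁ − ∂₁V₂` separates the density of
`Q` from the two squares. -/
def flux {X : Type*} (Du : X → ℂ) (c : X → ℝ) (ψ f : X → ℂ) (z : X) : ℝ :=
  (conj (f z) * Du z).im + 2 * (c z * (conj (ψ z) * f z).re)

theorem hasCompactSupport_flux {X : Type*} [TopologicalSpace X] {Du ψ f : X → ℂ} {c : X → ℝ}
    (hf : HasCompactSupport f) : HasCompactSupport (flux Du c ψ f) :=
  hf.mono <| Function.support_subset_iff'.2 fun z hz => by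
    simp [flux, Function.notMem_support.1 hz]

section Calculus

variable {E : Type*} [NormedAddCommGroup E] [NormedSpace ℝ E]

@[fun_prop]
theorem ContDiff.re {n : WithTop ℕ∞} {u : E → ℂ} (hu : ContDiff ℝ n u) :
    ContDiff ℝ n fun z => (u z).re :=
  reCLM.contDiff.comp hu

@[fun_prop]
theorem ContDiff.im {n : WithTop ℕ∞} {u : E → ℂ} (hu : ContDiff ℝ n u) :
    ContDiff ℝ n fun z => (u z).im :=
  imCLM.contDiff.comp hu

@[fun_prop]
theorem ContDiff.ofReal {n : WithTop ℕ∞} {g : E → ℝ} (hg : ContDiff ℝ n g) :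
    ContDiff ℝ n fun z => (g z : ℂ) :=
  ofRealCLM.contDiff.comp hg

variable {y w : E}

theorem fderiv_re_apply {u : E → ℂ} (hu : DifferentiableAt ℝ u y) :
    fderiv ℝ (fun z => (u z).re) y w = (fderiv ℝ u y w).re := by
  have h : HasFDerivAt (fun z => (u z).re) (reCLM.comp (fderiv ℝ u y)) y :=
    reCLM.hasFDerivAt.comp y hu.hasFDerivAt
  simp [h.fderiv]

theorem fderiv_im_apply {u : E → ℂ} (hu : DifferentiableAt ℝ u y) :
    fderiv ℝ (fun z => (u z).im) y w = (fderiv ℝ u y w).im := by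
  have h : HasFDerivAt (fun z => (u z).im) (imCLM.comp (fderiv ℝ u y)) y :=
    imCLM.hasFDerivAt.comp y hu.hasFDerivAt
  simp [h.fderiv]

theorem fderiv_ofReal_apply {g : E → ℝ} (hg : DifferentiableAt ℝ g y) :
    fderiv ℝ (fun z => (g z : ℂ)) y w = fderiv ℝ g y w := by
  have h : HasFDerivAt (fun z => (g z : ℂ)) (ofRealCLM.comp (fderiv ℝ g y)) y :=
    ofRealCLM.hasFDerivAt.comp y hg.hasFDerivAt
  simp [h.fderiv]

theorem contDiff_flux {n : WithTop ℕ∞} {Du ψ f : E → ℂ} {c : E → ℝ} (hDu : ContDiff ℝ n Du)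
    (hc : ContDiff ℝ n c) (hψ : ContDiff ℝ n ψ) (hf : ContDiff ℝ n f) :
    ContDiff ℝ n (flux Du c ψ f) := by
  unfold flux; fun_prop

theorem fderiv_flux_apply {Du ψ f : E → ℂ} {c : E → ℝ} (hDu : DifferentiableAt ℝ Du y)
    (hc : DifferentiableAt ℝ c y) (hψ : DifferentiableAt ℝ ψ y) (hf : DifferentiableAt ℝ f y) :
    fderiv ℝ (flux Du c ψ f) y w =
      (conj (fderiv ℝ f y w) * Du y + conj (f y) * fderiv ℝ Du y w).im
        + 2 * (fderiv ℝ c y w * (conj (ψ y) * f y).re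
          + c y * (conj (fderiv ℝ ψ y w) * f y + conj (ψ y) * fderiv ℝ f y w).re) := by
  have hf' : DifferentiableAt ℝ (fun z => conj (f z)) y := hf.star
  have hψ' : DifferentiableAt ℝ (fun z => conj (ψ z)) y := hψ.star
  unfold flux
  simp (disch := fun_prop) only [mul_im, mul_re, conj_re, conj_im, neg_mul, sub_neg_eq_add,
    fderiv_fun_add, fderiv_fun_mul, fderiv_fun_neg, fderiv_fun_const, neg_add_rev, smul_add,
    Pi.zero_apply, smul_zero, add_zero, add_apply, smul_apply, neg_apply, smul_eq_mul,
    fderiv_im_apply, fderiv_re_apply, add_im, add_re]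
  ring

theorem fderiv_add_I_mul_apply {g u : E → ℂ} {b : E → ℝ} (hg : DifferentiableAt ℝ g y)
    (hb : DifferentiableAt ℝ b y) (hu : DifferentiableAt ℝ u y) :
    fderiv ℝ (fun z => g z + I * b z * u z) y w
      = fderiv ℝ g y w + I * fderiv ℝ b y w * u y + I * b y * fderiv ℝ u y w := by
  simp (disch := fun_prop) only [fderiv_fun_add, fderiv_fun_mul, fderiv_fun_const, Pi.zero_apply,
    smul_add, add_apply, smul_apply, smul_eq_mul, fderiv_ofReal_apply, zero_apply, mul_zero,
    add_zero]
  ring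

end Calculus

section PartialDerivatives

variable {V : Type*} [NormedAddCommGroup V] [NormedSpace ℝ V] {n : WithTop ℕ∞}

theorem ContDiff.pd1 {m : WithTop ℕ∞} {f : ℝ × ℝ → V} (hf : ContDiff ℝ n f) (hmn : m + 1 ≤ n) :
    ContDiff ℝ m (pd1 f) :=
  (hf.fderiv_right hmn).clm_apply contDiff_const

theorem ContDiff.pd2 {m : WithTop ℕ∞} {f : ℝ × ℝ → V} (hf : ContDiff ℝ n f) (hmn : m + 1 ≤ n) :
    ContDiff ℝ m (pd2 f) :=
  (hf.fderiv_right hmn).clm_apply contDiff_const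

theorem pd2_pd1 {f : ℝ × ℝ → V} {y : ℝ × ℝ} (hf : ContDiffAt ℝ 2 f y) :
    pd2 (pd1 f) y = pd1 (pd2 f) y := by
  have hdf : DifferentiableAt ℝ (fderiv ℝ f) y :=
    (hf.fderiv_right le_rfl).differentiableAt one_ne_zero
  change fderiv ℝ (fun z => fderiv ℝ f z (1, 0)) y (0, 1)
    = fderiv ℝ (fun z => fderiv ℝ f z (0, 1)) y (1, 0)
  rw [fderiv_clm_apply hdf (differentiableAt_const _),
    fderiv_clm_apply hdf (differentiableAt_const _)]
  simpa using (hf.isSymmSndFDerivAt (by simp)).eq (0, 1) (1, 0)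

variable {b : ℝ × ℝ → ℝ} {f : ℝ × ℝ → ℂ} {y : ℝ × ℝ}

theorem pd2_D1 (hb : DifferentiableAt ℝ b y) (hf : ContDiff ℝ 2 f) :
    pd2 (D1 b f) y = pd2 (pd1 f) y + I * pd2 b y * f y + I * b y * pd2 f y :=
  fderiv_add_I_mul_apply ((hf.pd1 le_rfl).differentiable one_ne_zero y) hb
    (hf.differentiable two_ne_zero y)

theorem pd1_D2 (hb : DifferentiableAt ℝ b y) (hf : ContDiff ℝ 2 f) :
    pd1 (D2 b f) y = pd1 (pd2 f) y + I * pd1 b y * f y + I * b y * pd1 f y :=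
  fderiv_add_I_mul_apply ((hf.pd2 le_rfl).differentiable one_ne_zero y) hb
    (hf.differentiable two_ne_zero y)

end PartialDerivatives

def secondVariationDensity (ε : ℝ) (b1 b2 : ℝ × ℝ → ℝ) (ψ : ℝ × ℝ → ℂ) (c1 c2 : ℝ × ℝ → ℝ)
    (f : ℝ × ℝ → ℂ) (y : ℝ × ℝ) : ℝ :=
  ε ^ 2 * (pd1 c2 y - pd2 c1 y) ^ 2
    + ‖D1 b1 f y + I * (c1 y : ℂ) * ψ y‖ ^ 2
    + ‖D2 b2 f y + I * (c2 y : ℂ) * ψ y‖ ^ 2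
    - 2 * (c1 y * (conj (D1 b1 ψ y) * f y).im + c2 y * (conj (D2 b2 ψ y) * f y).im)
    + ε⁻¹ ^ 2 * ((conj (ψ y) * f y).re) ^ 2
    - 1 / (2 * ε ^ 2) * (1 - ‖ψ y‖ ^ 2) * ‖f y‖ ^ 2

theorem secondVariationDensity_eq_add_curl {ε : ℝ} (hε : ε ≠ 0) {b1 b2 c1 c2 : ℝ × ℝ → ℝ}
    {ψ f : ℝ × ℝ → ℂ} {y : ℝ × ℝ} (hb1 : Differentiable ℝ b1) (hb2 : Differentiable ℝ b2)
    (hψ : Differentiable ℝ ψ) (hc1 : Differentiable ℝ c1) (hc2 : Differentiable ℝ c2)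
    (hf : ContDiff ℝ 2 f) (hv1 : ε * F12 b1 b2 y = (1 - ‖ψ y‖ ^ 2) / (2 * ε))
    (hv2 : D1 b1 ψ y - I * D2 b2 ψ y = 0) :
    secondVariationDensity ε b1 b2 ψ c1 c2 f y
      = (ε * (pd1 c2 y - pd2 c1 y) + ε⁻¹ * (conj (ψ y) * f y).re) ^ 2
        + ‖(D1 b1 f y - I * D2 b2 f y) + I * ((c1 y : ℂ) - I * (c2 y : ℂ)) * ψ y‖ ^ 2
        - pd1 (flux (D2 b2 f) c2 ψ f) y + pd2 (flux (D1 b1 f) c1 ψ f) y := by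
  have hdf : Differentiable ℝ f := hf.differentiable two_ne_zero
  have hD1 : DifferentiableAt ℝ (D1 b1 f) y :=
    (((hf.pd1 le_rfl).differentiable one_ne_zero).add (by fun_prop)) y
  have hD2 : DifferentiableAt ℝ (D2 b2 f) y :=
    (((hf.pd2 le_rfl).differentiable one_ne_zero).add (by fun_prop)) y
  rw [pd1.eq_1 (flux _ _ _ _), pd2.eq_1 (flux _ _ _ _),
    fderiv_flux_apply hD2 (hc2 y) (hψ y) (hdf y), fderiv_flux_apply hD1 (hc1 y) (hψ y) (hdf y)]
  simp only [← pd1.eq_1, ← pd2.eq_1]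
  rw [pd1_D2 (hb2 y) hf, pd2_D1 (hb1 y) hf, pd2_pd1 hf.contDiffAt]
  simp only [secondVariationDensity, D1, D2, F12] at hv1 hv2 ⊢
  -- the vortex equations eliminate `∂₁ψ` and `∂₁b₂`; what is left is a polynomial identity
  rw [show pd1 ψ y = I * pd2 ψ y - b2 y * ψ y - I * b1 y * ψ y by
      linear_combination hv2 + (b2 y : ℂ) * ψ y * I_sq,
    show pd1 b2 y = pd2 b1 y + (1 - ‖ψ y‖ ^ 2) / (2 * ε ^ 2) by
      field_simp at hv1 ⊢; linarith]
  simp only [Complex.sq_norm, normSq_apply, map_sub, map_add, map_mul, conj_I, conj_ofReal,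
    mul_re, mul_im, add_re, add_im, sub_re, sub_im, I_re, I_im, ofReal_re, ofReal_im, conj_re,
    conj_im, neg_re, neg_im, neg_mul, one_mul, zero_mul, mul_zero, zero_sub, sub_zero, zero_add,
    add_zero, neg_neg]
  field_simp
  ring

section Integration

variable {E F : Type*} [NormedAddCommGroup E] [NormedSpace ℝ E] [MeasurableSpace E]
  [BorelSpace E] {μ : Measure E} [NormedAddCommGroup F] [NormedSpace ℝ F] {g : E → F}

theorem HasCompactSupport.integrable_fderiv_apply [IsFiniteMeasureOnCompacts μ]
    (hgs : HasCompactSupport g) (hg : ContDiff ℝ 1 g) (v : E) :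
    Integrable (fun x => fderiv ℝ g x v) μ :=
  ((hg.continuous_fderiv one_ne_zero).clm_apply continuous_const).integrable_of_hasCompactSupport
    (hgs.fderiv_apply ℝ v)

theorem integral_fderiv_apply_eq_zero [FiniteDimensional ℝ E] [μ.IsAddHaarMeasure]
    (hg : ContDiff ℝ 1 g) (hgs : HasCompactSupport g) (v : E) :
    ∫ x, fderiv ℝ g x v ∂μ = 0 := by
  simpa using integral_smul_fderiv_eq_neg_fderiv_smul_of_integrable (f := fun _ => (1 : ℝ))
    (by simp) (by simpa using hgs.integrable_fderiv_apply hg v)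
    (by simpa using hg.continuous.integrable_of_hasCompactSupport hgs)
    (fun _ _ => differentiableAt_const _) (fun x _ => hg.differentiable one_ne_zero x)

end Integration

theorem integral_sub_pd1_add_pd2 {g V1 V2 : ℝ × ℝ → ℝ} (hg : Integrable g)
    (hV1 : ContDiff ℝ 1 V1) (hV2 : ContDiff ℝ 1 V2) (hV1s : HasCompactSupport V1)
    (hV2s : HasCompactSupport V2) :
    ∫ y, (g y - pd1 V2 y + pd2 V1 y) = ∫ y, g y := by
  have hd1 : Integrable (pd1 V2) := hV2s.integrable_fderiv_apply hV2 _
  have hd2 : Integrable (pd2 V1) := hV1s.integrable_fderiv_apply hV1 _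
  have h1 : ∫ y, pd1 V2 y = 0 := integral_fderiv_apply_eq_zero hV2 hV2s _
  have h2 : ∫ y, pd2 V1 y = 0 := integral_fderiv_apply_eq_zero hV1 hV1s _
  rw [integral_add (f := fun y => g y - pd1 V2 y) (hg.sub hd1) hd2, integral_sub hg hd1, h1, h2,
    sub_zero, add_zero]

/-- the second variation of the Ginzburg-Landau energy at a vortex solution is a
sum of two squares; in particular it is nonnegative. -/
theorem second_variation_sum_of_squares (ε : ℝ) (hε : 0 < ε)
    (b1 b2 : ℝ × ℝ → ℝ) (ψ : ℝ × ℝ → ℂ)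
    (hb1 : ContDiff ℝ (⊤ : ℕ∞) b1) (hb2 : ContDiff ℝ (⊤ : ℕ∞) b2)
    (hψ : ContDiff ℝ (⊤ : ℕ∞) ψ)
    (hv1 : ∀ y, ε * F12 b1 b2 y = (1 - ‖ψ y‖ ^ 2) / (2 * ε))
    (hv2 : ∀ y, D1 b1 ψ y - I * D2 b2 ψ y = 0)
    (c1 c2 : ℝ × ℝ → ℝ) (f : ℝ × ℝ → ℂ)
    (hc1 : ContDiff ℝ (⊤ : ℕ∞) c1) (hc2 : ContDiff ℝ (⊤ : ℕ∞) c2)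
    (hf : ContDiff ℝ (⊤ : ℕ∞) f)
    (hc1s : HasCompactSupport c1) (hc2s : HasCompactSupport c2)
    (hfs : HasCompactSupport f) :
    (∫ y : ℝ × ℝ,
        (ε ^ 2 * (pd1 c2 y - pd2 c1 y) ^ 2
          + ‖D1 b1 f y + I * (c1 y : ℂ) * ψ y‖ ^ 2
          + ‖D2 b2 f y + I * (c2 y : ℂ) * ψ y‖ ^ 2
          - 2 * (c1 y * ((starRingEnd ℂ) (D1 b1 ψ y) * f y).im
            + c2 y * ((starRingEnd ℂ) (D2 b2 ψ y) * f y).im)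
          + ε⁻¹ ^ 2 * (((starRingEnd ℂ) (ψ y) * f y).re) ^ 2
          - 1 / (2 * ε ^ 2) * (1 - ‖ψ y‖ ^ 2) * ‖f y‖ ^ 2))
      = (∫ y : ℝ × ℝ,
          (ε * (pd1 c2 y - pd2 c1 y) + ε⁻¹ * ((starRingEnd ℂ) (ψ y) * f y).re) ^ 2)
        + (∫ y : ℝ × ℝ,
          ‖(D1 b1 f y - I * D2 b2 f y) + I * ((c1 y : ℝ) - I * ((c2 y : ℝ) : ℂ)) * ψ y‖ ^ 2) ∧
    0 ≤ (∫ y : ℝ × ℝ,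
        (ε ^ 2 * (pd1 c2 y - pd2 c1 y) ^ 2
          + ‖D1 b1 f y + I * (c1 y : ℂ) * ψ y‖ ^ 2
          + ‖D2 b2 f y + I * (c2 y : ℂ) * ψ y‖ ^ 2
          - 2 * (c1 y * ((starRingEnd ℂ) (D1 b1 ψ y) * f y).im
            + c2 y * ((starRingEnd ℂ) (D2 b2 ψ y) * f y).im)
          + ε⁻¹ ^ 2 * (((starRingEnd ℂ) (ψ y) * f y).re) ^ 2
          - 1 / (2 * ε ^ 2) * (1 - ‖ψ y‖ ^ 2) * ‖f y‖ ^ 2)) := by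
  have hf2 : ContDiff ℝ 2 f := hf.of_le (WithTop.coe_le_coe.2 le_top)
  have hD1 : ContDiff ℝ (⊤ : ℕ∞) (D1 b1 f) := by
    have := hf.pd1 (m := (⊤ : ℕ∞)) (by simp); unfold D1; fun_prop
  have hD2 : ContDiff ℝ (⊤ : ℕ∞) (D2 b2 f) := by
    have := hf.pd2 (m := (⊤ : ℕ∞)) (by simp); unfold D2; fun_prop
  have hpd1 := (hc2.pd1 (m := (⊤ : ℕ∞)) (by simp)).continuous
  have hpd2 := (hc1.pd2 (m := (⊤ : ℕ∞)) (by simp)).continuous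
  have hdensity y := secondVariationDensity_eq_add_curl hε.ne' (hb1.differentiable (by simp))
    (hb2.differentiable (by simp)) (hψ.differentiable (by simp)) (hc1.differentiable (by simp))
    (hc2.differentiable (by simp)) hf2 (hv1 y) (hv2 y)
  have key : ∫ y, secondVariationDensity ε b1 b2 ψ c1 c2 f y
      = (∫ y, (ε * (pd1 c2 y - pd2 c1 y) + ε⁻¹ * (conj (ψ y) * f y).re) ^ 2)
        + ∫ y, ‖(D1 b1 f y - I * D2 b2 f y) + I * ((c1 y : ℂ) - I * (c2 y : ℂ)) * ψ y‖ ^ 2 := by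
    rw [← integral_add ?sq1 ?sq2]
    refine (integral_congr_ae (.of_forall hdensity)).trans (integral_sub_pd1_add_pd2
      (Integrable.add ?sq1 ?sq2) ((contDiff_flux hD1 hc1 hψ hf).of_le (WithTop.coe_le_coe.2 le_top))
      ((contDiff_flux hD2 hc2 hψ hf).of_le (WithTop.coe_le_coe.2 le_top))
      (hasCompactSupport_flux hfs) (hasCompactSupport_flux hfs))
    all_goals
      refine Continuous.integrable_of_hasCompactSupport (by fun_prop)
        (.intro ((hc1s.union hc2s).union hfs) fun y hy => ?_)
      obtain ⟨⟨hy1, hy2⟩, hyf⟩ : (y ∉ tsupport c1 ∧ y ∉ tsupport c2) ∧ y ∉ tsupport f := by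
        simpa only [Set.mem_union, not_or] using hy
      simp [D1, D2, pd1, pd2, image_eq_zero_of_notMem_tsupport, fderiv_of_notMem_tsupport,
        hy1, hy2, hyf]
  exact ⟨key, key ▸ add_nonneg (integral_nonneg fun _ => sq_nonneg _)
    (integral_nonneg fun _ => by positivity)⟩
end
end

section
/- Let n ≥ 1, let c > 0 and 0 ≤ λ < c, and let u : ℝⁿ → ℝ be a smooth function satisfying Δu(x) = c²·u(x) for all x ∈ ℝⁿ and |u(x)| ≤ M·e^{λ|x|} for some constant M and all x ∈ ℝⁿ. Then u is identically zero. -/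
noncomputable section

open MeasureTheory Filter

/-- Partial derivative on `ℝⁿ` in the `j`-th coordinate direction. -/
def pdE {n : ℕ} (j : Fin n) (f : EuclideanSpace ℝ (Fin n) → ℝ)
    (x : EuclideanSpace ℝ (Fin n)) : ℝ :=
  fderiv ℝ f x (EuclideanSpace.single j 1)

/-- The Euclidean Laplacian `Δu = Σ_j ∂²u/∂x_j²`. -/
def lapE {n : ℕ} (f : EuclideanSpace ℝ (Fin n) → ℝ) (x : EuclideanSpace ℝ (Fin n)) : ℝ :=
  ∑ j : Fin n, pdE j (fun z => pdE j f z) x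

/-!
Plane-wave sums `h x = ∑ w ∈ T, exp ⟪w, x⟫` with `‖w‖ ≤ c` satisfy `Δh ≤ c² h`, and taking `T`
to be a finite net of the ball of radius `c` makes `h x ≥ exp (μ ‖x‖)` for a fixed `μ ∈ (λ, c)`.
So `u - ε h` tends to `-∞` at infinity and has a global maximum, where
`c² (u - ε h) ≤ Δ (u - ε h) ≤ 0`. Hence `u ≤ ε h` for every `ε > 0`, i.e. `u ≤ 0`, and likewise
`-u ≤ 0`.
-/

open Topology RealInnerProductSpace InnerProductSpace Laplacian

theorem IsLocalMax.deriv_deriv_nonpos {f : ℝ → ℝ} {a : ℝ} (h : IsLocalMax f a)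
    (hc : ContinuousAt f a) : deriv (deriv f) a ≤ 0 := by
  by_contra! hpos
  have hmin := isLocalMin_of_deriv_deriv_pos hpos h.deriv_eq_zero hc
  have hconst : f =ᶠ[𝓝 a] fun _ => f a := (hmin.and h).mono fun x hx => le_antisymm hx.2 hx.1
  have hzero : deriv (deriv f) a = 0 := by simpa using hconst.deriv.deriv_eq
  exact hpos.ne' hzero

theorem tendsto_mul_exp_sub_mul_exp_atBot (M : ℝ) {lam μ ε : ℝ} (hlam : lam < μ) (hμ : 0 < μ)
    (hε : 0 < ε) :
    Tendsto (fun r => M * Real.exp (lam * r) - ε * Real.exp (μ * r)) atTop atBot := by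
  have hfactor : (fun r => M * Real.exp (lam * r) - ε * Real.exp (μ * r)) =
      fun r => Real.exp (μ * r) * (M * Real.exp ((lam - μ) * r) - ε) := by
    funext r
    rw [mul_sub, ← mul_assoc, mul_comm _ M, mul_assoc, ← Real.exp_add]
    ring_nf
  rw [hfactor]
  refine Tendsto.atTop_mul_neg (neg_neg_of_pos hε) ?_ ?_
  · exact Real.tendsto_exp_atTop.comp (tendsto_id.const_mul_atTop hμ)
  · simpa using ((Real.tendsto_exp_atBot.comp
      (tendsto_id.const_mul_atTop_of_neg (sub_neg.2 hlam))).const_mul M).sub_const ε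

theorem deriv_comp_add_smul {E : Type*} [NormedAddCommGroup E] [NormedSpace ℝ E] {F : E → ℝ}
    (hF : Differentiable ℝ F) (x v : E) :
    deriv (fun t : ℝ => F (x + t • v)) = fun t => fderiv ℝ F (x + t • v) v := by
  funext t
  have hline : HasDerivAt (fun t : ℝ => x + t • v) v t := by
    simpa using ((hasDerivAt_id t).smul_const v).const_add x
  exact ((hF _).hasFDerivAt.comp_hasDerivAt t hline).deriv

theorem exists_finset_forall_mul_norm_le_inner {E : Type*} [NormedAddCommGroup E]
    [InnerProductSpace ℝ E] [ProperSpace E] {μ c : ℝ} (hc : 0 ≤ c) (hμc : μ < c) :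
    ∃ T : Finset E, (∀ w ∈ T, ‖w‖ ≤ c) ∧ ∀ x, ∃ w ∈ T, μ * ‖x‖ ≤ ⟪w, x⟫ := by
  obtain ⟨t, hts, ht, hcover⟩ :=
    finite_cover_balls_of_compact (isCompact_closedBall (0 : E) c) (sub_pos.2 hμc)
  refine ⟨ht.toFinset, fun w hw => by simpa using hts (ht.mem_toFinset.1 hw), fun x => ?_⟩
  -- the point of norm `c` on the ray through `x` (and `0` for `x = 0`, as `c / 0 = 0`)
  set v := (c / ‖x‖) • x
  have hv : ‖v‖ ≤ c ∧ ⟪v, x⟫ = c * ‖x‖ := by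
    rcases eq_or_ne x 0 with rfl | hx
    · simpa [v] using hc
    · have hx' : ‖x‖ ≠ 0 := norm_ne_zero_iff.2 hx
      refine ⟨le_of_eq ?_, ?_⟩
      · rw [norm_smul, Real.norm_eq_abs, abs_of_nonneg (by positivity), div_mul_cancel₀ _ hx']
      · rw [real_inner_smul_left, real_inner_self_eq_norm_sq]
        field_simp
  obtain ⟨w, hw, hvw⟩ := Set.mem_iUnion₂.1 (hcover (by simpa using hv.1))
  refine ⟨w, ht.mem_toFinset.2 hw, ?_⟩
  have hvw' : ‖v - w‖ < c - μ := by rwa [← dist_eq_norm]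
  calc μ * ‖x‖ = c * ‖x‖ - (c - μ) * ‖x‖ := by ring
    _ ≤ ⟪v, x⟫ - ‖v - w‖ * ‖x‖ := by rw [hv.2]; gcongr
    _ ≤ ⟪v, x⟫ - ⟪v - w, x⟫ := by gcongr; exact real_inner_le_norm _ _
    _ = ⟪w, x⟫ := by rw [inner_sub_left]; ring

section

variable {n : ℕ}

theorem differentiable_pdE (j : Fin n) {f : EuclideanSpace ℝ (Fin n) → ℝ} (hf : ContDiff ℝ 2 f) :
    Differentiable ℝ (pdE j f) :=
  ((hf.fderiv_right (m := 1) (by norm_num)).clm_apply contDiff_const).differentiable one_ne_zero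

theorem lapE_eq_laplacian {f : EuclideanSpace ℝ (Fin n) → ℝ} (hf : ContDiff ℝ 2 f) :
    lapE f = Δ f := by
  rw [laplacian_eq_iteratedFDeriv_orthonormalBasis f (EuclideanSpace.basisFun (Fin n) ℝ)]
  funext x
  refine Finset.sum_congr rfl fun j _ => ?_
  have hdf : Differentiable ℝ (fderiv ℝ f) :=
    (hf.fderiv_right (m := 1) (by norm_num)).differentiable one_ne_zero
  simp only [pdE, iteratedFDeriv_two_apply, EuclideanSpace.basisFun_apply]
  rw [fderiv_clm_apply (hdf x) (differentiableAt_const _)]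
  simp

theorem lapE_nonpos_of_isLocalMax {f : EuclideanSpace ℝ (Fin n) → ℝ} (hf : ContDiff ℝ 2 f)
    {x : EuclideanSpace ℝ (Fin n)} (hx : IsLocalMax f x) : lapE f x ≤ 0 := by
  refine Finset.sum_nonpos fun j _ => ?_
  set v := EuclideanSpace.single j (1 : ℝ)
  have hx' : IsLocalMax f (x + (0 : ℝ) • v) := by rwa [zero_smul, add_zero]
  have hline : IsLocalMax (fun t : ℝ => f (x + t • v)) 0 :=
    hx'.comp_continuous (g := fun t : ℝ => x + t • v) (by fun_prop)
  have h := hline.deriv_deriv_nonpos (hf.continuous.comp (by fun_prop)).continuousAt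
  rw [deriv_comp_add_smul (hf.differentiable two_ne_zero)] at h
  change deriv (fun t => pdE j f (x + t • v)) 0 ≤ 0 at h
  simp only [deriv_comp_add_smul (differentiable_pdE j hf), zero_smul, add_zero] at h
  exact h

theorem pdE_sum_mul_exp_inner (j : Fin n) (T : Finset (EuclideanSpace ℝ (Fin n)))
    (a : EuclideanSpace ℝ (Fin n) → ℝ) :
    pdE j (fun y => ∑ w ∈ T, a w * Real.exp ⟪w, y⟫) =
      fun y => ∑ w ∈ T, a w * w j * Real.exp ⟪w, y⟫ := by
  funext y
  have hexp : ∀ w : EuclideanSpace ℝ (Fin n),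
      HasFDerivAt (fun y => Real.exp ⟪w, y⟫) (Real.exp ⟪w, y⟫ • innerSL ℝ w) y :=
    fun w => (innerSL ℝ w).hasFDerivAt.exp
  rw [pdE, (HasFDerivAt.fun_sum fun w _ => (hexp w).const_mul (a w)).fderiv]
  simp [EuclideanSpace.inner_single_right, mul_comm, mul_assoc]

theorem lapE_sum_exp_inner (T : Finset (EuclideanSpace ℝ (Fin n))) (x : EuclideanSpace ℝ (Fin n)) :
    lapE (fun y => ∑ w ∈ T, Real.exp ⟪w, y⟫) x = ∑ w ∈ T, ‖w‖ ^ 2 * Real.exp ⟪w, x⟫ := by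
  have hfirst (j : Fin n) : pdE j (fun y => ∑ w ∈ T, Real.exp ⟪w, y⟫) =
      fun y => ∑ w ∈ T, w j * Real.exp ⟪w, y⟫ := by
    simpa using pdE_sum_mul_exp_inner j T 1
  simp only [lapE, hfirst, pdE_sum_mul_exp_inner]
  rw [Finset.sum_comm]
  refine Finset.sum_congr rfl fun w _ => ?_
  rw [← Finset.sum_mul, EuclideanSpace.norm_sq_eq]
  simp only [Real.norm_eq_abs, sq_abs, ← sq]

theorem exists_supersolution_exp_le {μ c : ℝ} (hc : 0 ≤ c) (hμc : μ < c) :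
    ∃ h : EuclideanSpace ℝ (Fin n) → ℝ, ContDiff ℝ 2 h ∧ (∀ x, lapE h x ≤ c ^ 2 * h x) ∧
      ∀ x, Real.exp (μ * ‖x‖) ≤ h x := by
  obtain ⟨T, hTc, hTx⟩ :=
    exists_finset_forall_mul_norm_le_inner (E := EuclideanSpace ℝ (Fin n)) hc hμc
  refine ⟨fun y => ∑ w ∈ T, Real.exp ⟪w, y⟫, ?_, fun x => ?_, fun x => ?_⟩
  · exact ContDiff.sum fun w _ => ((innerSL ℝ w).contDiff).exp
  · rw [lapE_sum_exp_inner, Finset.mul_sum]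
    gcongr with w hw
    exact hTc w hw
  · obtain ⟨w, hw, hμw⟩ := hTx x
    calc Real.exp (μ * ‖x‖) ≤ Real.exp ⟪w, x⟫ := Real.exp_le_exp.2 hμw
      _ ≤ ∑ w ∈ T, Real.exp ⟪w, x⟫ :=
        Finset.single_le_sum (f := fun w => Real.exp ⟪w, x⟫) (fun _ _ => (Real.exp_pos _).le) hw

theorem nonpos_of_sq_mul_le_lapE {c : ℝ} (hc : c ≠ 0) {φ : EuclideanSpace ℝ (Fin n) → ℝ}
    (hφ : ContDiff ℝ 2 φ) (hΔ : ∀ x, c ^ 2 * φ x ≤ lapE φ x)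
    (hlim : Tendsto φ (cocompact _) atBot) (x : EuclideanSpace ℝ (Fin n)) : φ x ≤ 0 := by
  obtain ⟨x₀, hx₀⟩ := hφ.continuous.exists_forall_ge hlim
  have hmax : c ^ 2 * φ x₀ ≤ 0 :=
    (hΔ x₀).trans (lapE_nonpos_of_isLocalMax hφ (Filter.Eventually.of_forall hx₀))
  exact (hx₀ x).trans (nonpos_of_mul_nonpos_right hmax (by positivity))

theorem nonpos_of_sq_mul_le_lapE_of_le_exp {c lam M : ℝ} (hc : 0 < c) (hlamc : lam < c)
    {u : EuclideanSpace ℝ (Fin n) → ℝ} (hu : ContDiff ℝ 2 u) (hΔ : ∀ x, c ^ 2 * u x ≤ lapE u x)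
    (hM : ∀ x, u x ≤ M * Real.exp (lam * ‖x‖)) (x : EuclideanSpace ℝ (Fin n)) : u x ≤ 0 := by
  obtain ⟨μ, hμ, hμc⟩ := exists_between (max_lt hlamc hc)
  obtain ⟨h, hh, hΔh, hh_ge⟩ := exists_supersolution_exp_le (n := n) hc.le hμc
  have hu_le (ε : ℝ) (hε : 0 < ε) : u x ≤ ε * h x := by
    have hεh : ContDiff ℝ 2 (ε • h) := hh.const_smul ε
    have hφ : ContDiff ℝ 2 (u - ε • h) := hu.sub hεh
    refine sub_nonpos.1 (nonpos_of_sq_mul_le_lapE hc.ne' hφ (fun y => ?_) ?_ x)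
    · rw [lapE_eq_laplacian hφ, hu.contDiffAt.laplacian_sub hεh.contDiffAt,
        laplacian_smul _ hh.contDiffAt, ← lapE_eq_laplacian hu, ← lapE_eq_laplacian hh]
      simp only [Pi.sub_apply, Pi.smul_apply, smul_eq_mul]
      nlinarith [hΔ y, hΔh y]
    · refine tendsto_atBot_mono (fun y => ?_) ((tendsto_mul_exp_sub_mul_exp_atBot M
        ((le_max_left _ _).trans_lt hμ) ((le_max_right _ _).trans_lt hμ) hε).comp
        tendsto_norm_cocompact_atTop)
      simp only [Function.comp_apply, Pi.sub_apply, Pi.smul_apply, smul_eq_mul]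
      nlinarith [hM y, hh_ge y]
  have hx_pos : 0 < h x := (Real.exp_pos _).trans_le (hh_ge x)
  refine le_of_forall_pos_le_add fun δ hδ => ?_
  simpa [div_mul_cancel₀ _ hx_pos.ne'] using hu_le (δ / h x) (div_pos hδ hx_pos)

end

theorem liouville_exponential_general (n : ℕ) (c lam : ℝ)
    (hc : 0 < c) (hlamc : lam < c)
    (u : EuclideanSpace ℝ (Fin n) → ℝ) (hu : ContDiff ℝ (⊤ : ℕ∞) u)
    (hΔ : ∀ x, lapE u x = c ^ 2 * u x)
    (M : ℝ) (hM : ∀ x, |u x| ≤ M * Real.exp (lam * ‖x‖)) :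
    u = fun _ => 0 := by
  have hu₂ : ContDiff ℝ 2 u := hu.of_le (WithTop.coe_le_coe.2 le_top)
  funext x
  refine le_antisymm ?_ ?_
  · exact nonpos_of_sq_mul_le_lapE_of_le_exp hc hlamc hu₂ (fun y => (hΔ y).ge)
      (fun y => (le_abs_self _).trans (hM y)) x
  · have hu₂_neg : ContDiff ℝ 2 (-u) := hu₂.neg
    refine neg_nonpos.1 (nonpos_of_sq_mul_le_lapE_of_le_exp hc hlamc hu₂_neg (fun y => ?_)
      (fun y => (neg_le_abs _).trans (hM y)) x)
    rw [lapE_eq_laplacian hu₂_neg, laplacian_neg, ← lapE_eq_laplacian hu₂, Pi.neg_apply,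
      Pi.neg_apply, hΔ, mul_neg]

/-- a Liouville-type theorem: a smooth solution of `Δu = c²u` on `ℝⁿ`
growing slower than `e^{c|x|}` is identically zero. -/
theorem liouville_exponential (n : ℕ) (hn : 1 ≤ n) (c lam : ℝ)
    (hc : 0 < c) (hlam0 : 0 ≤ lam) (hlamc : lam < c)
    (u : EuclideanSpace ℝ (Fin n) → ℝ) (hu : ContDiff ℝ (⊤ : ℕ∞) u)
    (hΔ : ∀ x, lapE u x = c ^ 2 * u x)
    (M : ℝ) (hM : ∀ x, |u x| ≤ M * Real.exp (lam * ‖x‖)) :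
    u = fun _ => 0 :=
  liouville_exponential_general n c lam hc hlamc u hu hΔ M hM
end
end
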